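/- arXiv:2211.05780 — 7 statements merged into one kernel-verified Lean document; each statement's English description precedes it below -/
import Mathlib

section
/- Let A be an m×n matrix over a field F with rank(A_{I×J}) = rank(A_{I×[n]}) < r, where I ⊆ [m] and J ⊆ [n] have size r. Then adj(A_{I×J}) · A_{I×[n]} = 0. -/
/-!
Since `A_{I×J}` consists of columns of `A_{I×[n]}`, its column space is contained in that of
`A_{I×[n]}`; equal ranks force equality, so `A_{I×[n]} = A_{I×J} X` for some `X`. Then
`adj(A_{I×J}) A_{I×[n]} = det(A_{I×J}) X = 0`, the determinant vanishing because the rank is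
less than `r`.
-/

open Matrix

namespace Matrix

variable {R : Type*} {l m n : Type*}

theorem range_mulVecLin_submatrix_id_le [CommSemiring R] [Fintype n] [Fintype l]
    (A : Matrix m n R) (c : l → n) :
    LinearMap.range (A.submatrix id c).mulVecLin ≤ LinearMap.range A.mulVecLin := by
  rw [range_mulVecLin, range_mulVecLin]
  exact Submodule.span_mono (Set.range_comp_subset_range c A.col)

theorem exists_eq_mul_of_range_mulVecLin_le [CommSemiring R] [Fintype l] [Fintype n]
    {B : Matrix m l R} {M : Matrix m n R}
    (h : LinearMap.range M.mulVecLin ≤ LinearMap.range B.mulVecLin) :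
    ∃ X : Matrix l n R, M = B * X := by
  have hcol (j : n) : ∃ x, B *ᵥ x = M.col j := h (by
    rw [range_mulVecLin]
    exact Submodule.subset_span ⟨j, rfl⟩)
  choose x hx using hcol
  refine ⟨(of x)ᵀ, ext fun i j => ?_⟩
  rw [← col_apply M j i, ← hx j]
  rfl

theorem det_eq_zero_of_rank_lt [CommRing R] [IsDomain R] [Fintype n] [DecidableEq n]
    {B : Matrix n n R} (h : B.rank < Fintype.card n) : B.det = 0 := by
  by_contra hdet
  exact h.ne (rank_of_det_ne_zero hdet)

theorem adjugate_mul_eq_zero_of_eq_mul [CommRing R] [Fintype n] [DecidableEq n]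
    {B : Matrix n n R} {M : Matrix n m R} {X : Matrix n m R}
    (hdet : B.det = 0) (hM : M = B * X) : B.adjugate * M = 0 := by
  rw [hM, ← Matrix.mul_assoc, adjugate_mul, hdet, zero_smul, Matrix.zero_mul]

end Matrix

/-- If `rank(A_{I×J}) = rank(A_{I×[n]}) < r`, then `adj(A_{I×J}) · A_{I×[n]} = 0`. -/
theorem stmt2 {F : Type*} [Field F] {m n r : ℕ}
    (A : Matrix (Fin m) (Fin n) F) (f : Fin r ↪ Fin m) (g : Fin r ↪ Fin n)
    (heq : (A.submatrix ⇑f ⇑g).rank = (A.submatrix ⇑f id).rank)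
    (hlt : (A.submatrix ⇑f id).rank < r) :
    (A.submatrix ⇑f ⇑g).adjugate * A.submatrix ⇑f id = 0 := by
  set M := A.submatrix f id
  set B := A.submatrix f g
  have hle : LinearMap.range B.mulVecLin ≤ LinearMap.range M.mulVecLin :=
    M.range_mulVecLin_submatrix_id_le g
  have hrange : LinearMap.range M.mulVecLin ≤ LinearMap.range B.mulVecLin :=
    (Submodule.eq_of_le_of_finrank_eq hle heq).ge
  obtain ⟨X, hX⟩ := exists_eq_mul_of_range_mulVecLin_le hrange
  have hdet : B.det = 0 :=
    det_eq_zero_of_rank_lt (by rwa [heq, Fintype.card_fin])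
  exact adjugate_mul_eq_zero_of_eq_mul hdet hX
end

section
/- Let A be an m×n matrix over a field F, I an r-subset of [m], J an r-subset of [n]. Define Q_{I,J}(A) to be the n×n matrix whose rows indexed by J are the rows of adj(A_{I×J})·A_{I×[n]} and which is zero elsewhere, and P_{I,J}(A) = det(A_{I×J})·Id_n − Q_{I,J}(A). If rank(A) ≤ r, then the column space (image) of P_{I,J}(A) is contained in the kernel of A, i.e. A·P_{I,J}(A) = 0. -/
open Matrix Equiv Finset

set_option maxHeartbeats 1600000

/-- Expansion of a vanishing bordered determinant: if `det B = 0` for an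
`(r+1)×(r+1)` matrix `B`, then writing `M` for the lower-right `r×r` minor
(rows and columns `1..r`), we get an identity expressing `B 0 0 * det M`
through Cramer's rule applied to the first column and first row borders. -/
private lemma bordered_det_expansion {F : Type*} [Field F] {r : ℕ}
    (B : Matrix (Fin (r + 1)) (Fin (r + 1)) F) (hB : B.det = 0) :
    B 0 0 * (B.submatrix Fin.succ Fin.succ).det =
      ∑ k : Fin r, B 0 k.succ *
        Matrix.cramer (B.submatrix Fin.succ Fin.succ) (fun l => B l.succ 0) k := by
  set M := B.submatrix Fin.succ Fin.succ with hM
  set v : Fin r → F := fun l => B l.succ 0 with hv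
  have hmul := congrFun (congrFun (Matrix.mul_adjugate B) 0) 0
  rw [Matrix.smul_apply, Matrix.one_apply_eq, hB, smul_eq_mul, zero_mul,
    Matrix.mul_apply, Fin.sum_univ_succ] at hmul
  have h00 : B.adjugate 0 0 = M.det := by
    rw [Matrix.adjugate_fin_succ_eq_det_submatrix]
    simp [Fin.succAbove_zero, hM]
  have hk : ∀ k : Fin r, B.adjugate k.succ 0 = - Matrix.cramer M v k := by
    intro k
    rw [Matrix.adjugate_fin_succ_eq_det_submatrix]
    have hcol : (B.submatrix Fin.succ ((Fin.succ k : Fin (r+1)).succAbove)).submatrix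
        id ⇑(Fin.cycleRange k) = M.updateCol k v := by
      ext l t
      simp only [Matrix.submatrix_apply, id_eq]
      rw [Fin.succAbove_cycleRange]
      rcases eq_or_ne t k with h | h
      · subst h
        simp [Equiv.swap_apply_right, Matrix.updateCol_apply, hv]
      · rw [Equiv.swap_apply_of_ne_of_ne (Fin.succ_ne_zero t)
          (by simpa using h)]
        simp [Matrix.updateCol_apply, h, hM]
    have hperm := Matrix.det_permute' (Fin.cycleRange k)
      (B.submatrix Fin.succ ((Fin.succ k : Fin (r+1)).succAbove))
    rw [hcol, Fin.sign_cycleRange] at hperm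
    simp only [Units.val_pow_eq_pow_val, Units.val_neg, Units.val_one,
      Int.cast_pow, Int.cast_neg, Int.cast_one] at hperm
    have hsq : ((-1 : F) ^ (k : ℕ)) * ((-1 : F) ^ (k : ℕ)) = 1 := by
      rw [← pow_add, ← two_mul, pow_mul]; simp
    have hexp : (B.submatrix Fin.succ ((Fin.succ k : Fin (r+1)).succAbove)).det
        = (-1 : F) ^ (k : ℕ) * Matrix.cramer M v k := by
      rw [Matrix.cramer_apply, hperm, ← mul_assoc, hsq, one_mul]
    rw [Fin.succAbove_zero, hexp]
    have hpow : (-1 : F) ^ ((0 : Fin (r+1)) : ℕ) * (-1 : F) ^ ((Fin.succ k : Fin (r+1)) : ℕ)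
          * (-1 : F) ^ (k : ℕ) = -1 := by
      simp only [Fin.val_zero, Fin.val_succ, pow_zero, one_mul, mul_one]
      rw [← pow_add]
      have : (k : ℕ) + 1 + (k : ℕ) = 2 * (k : ℕ) + 1 := by ring
      rw [this, pow_succ, pow_mul]
      simp
    rw [pow_add, ← mul_assoc, hpow]
    ring
  rw [h00] at hmul
  have hsum : ∑ x : Fin r, B 0 x.succ * B.adjugate x.succ 0
      = - ∑ x : Fin r, B 0 x.succ * Matrix.cramer M v x := by
    rw [← Finset.sum_neg_distrib]
    exact Finset.sum_congr rfl fun x _ => by rw [hk x, mul_neg]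
  rw [hsum] at hmul
  linear_combination hmul

/-- With `Q_{I,J}(A)` the n×n matrix whose rows indexed by `J` are the rows of
`adj(A_{I×J})·A_{I×[n]}` and zero elsewhere, and `P_{I,J}(A) = det(A_{I×J})·Id − Q_{I,J}(A)`:
if `rank A ≤ r` then `A · P_{I,J}(A) = 0`, i.e. the image of `P_{I,J}(A)` is contained in
the kernel of `A`. -/
theorem stmt3 {F : Type*} [Field F] {m n r : ℕ}
    (A : Matrix (Fin m) (Fin n) F) (f : Fin r ↪ Fin m) (g : Fin r ↪ Fin n)
    (Q : Matrix (Fin n) (Fin n) F)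
    (hQ1 : ∀ (k : Fin r) (j : Fin n),
      Q (g k) j = ((A.submatrix ⇑f ⇑g).adjugate * A.submatrix ⇑f id) k j)
    (hQ2 : ∀ i : Fin n, (∀ k : Fin r, g k ≠ i) → ∀ j : Fin n, Q i j = 0)
    (hrank : A.rank ≤ r) :
    A * ((A.submatrix ⇑f ⇑g).det • (1 : Matrix (Fin n) (Fin n) F) - Q) = 0 := by
  set M := A.submatrix ⇑f ⇑g with hMdef
  have key : ∀ (i : Fin m) (j : Fin n),
      A i j * M.det = ∑ k : Fin r, A i (g k) *
        Matrix.cramer M (fun l => A (f l) j) k := by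
    intro i j
    set rmap : Fin (r+1) → Fin m := Fin.cons i ⇑f with hrmap
    set cmap : Fin (r+1) → Fin n := Fin.cons j ⇑g with hcmap
    set B : Matrix (Fin (r+1)) (Fin (r+1)) F :=
      Matrix.of fun p q => A (rmap p) (cmap q) with hBdef
    have hdetB : B.det = 0 := by
      by_contra hne
      have hunit : IsUnit B := (Matrix.isUnit_iff_isUnit_det B).mpr
        (isUnit_iff_ne_zero.mpr hne)
      have hrB : B.rank = r + 1 := by
        rw [Matrix.rank_of_isUnit B hunit, Fintype.card_fin]
      have hfact : B = (Matrix.of fun (p : Fin (r+1)) (x : Fin m) =>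
            if x = rmap p then (1:F) else 0) * A *
          (Matrix.of fun (y : Fin n) (q : Fin (r+1)) =>
            if y = cmap q then (1:F) else 0) := by
        ext p q
        have h1 : ∀ y, ((Matrix.of fun (p : Fin (r+1)) (x : Fin m) =>
            if x = rmap p then (1:F) else 0) * A) p y
            = A (rmap p) y := by
          intro y
          simp [Matrix.mul_apply, ite_mul]
        rw [Matrix.mul_apply]
        simp only [h1, Matrix.of_apply, mul_ite, mul_one, mul_zero]
        rw [Finset.sum_ite_eq' Finset.univ (cmap q) (fun x => A (rmap p) x)]
        simp [hBdef]
      have hle : B.rank ≤ A.rank := by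
        rw [hfact]
        exact le_trans (Matrix.rank_mul_le_left _ _) (Matrix.rank_mul_le_right _ _)
      omega
    have hBsub : B.submatrix Fin.succ Fin.succ = M := by
      ext k l
      simp [hBdef, hMdef, hrmap, hcmap]
    have h := bordered_det_expansion B hdetB
    rw [hBsub] at h
    simpa [hBdef, hrmap, hcmap] using h
  ext i j
  rw [Matrix.zero_apply, Matrix.mul_apply]
  have expand : ∀ x, A i x * (M.det • (1 : Matrix (Fin n) (Fin n) F) - Q) x j
      = (if x = j then A i x * M.det else 0) - A i x * Q x j := by
    intro x
    by_cases h : x = j <;>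
      simp [Matrix.sub_apply, Matrix.one_apply, h, mul_sub]
  simp only [expand, Finset.sum_sub_distrib, Finset.sum_ite_eq' Finset.univ j
    (fun x => A i x * M.det), Finset.mem_univ, if_true]
  have hsum : ∑ x : Fin n, A i x * Q x j
      = ∑ k : Fin r, A i (g k) * Q (g k) j := by
    rw [← Finset.sum_map Finset.univ g (fun x => A i x * Q x j)]
    refine (Finset.sum_subset (Finset.subset_univ _) ?_).symm
    intro x _ hx
    have hx' : ∀ k : Fin r, g k ≠ x := by
      intro k hk
      exact hx (Finset.mem_map.mpr ⟨k, Finset.mem_univ k, hk⟩)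
    rw [hQ2 x hx' j, mul_zero]
  rw [hsum]
  have hQval : ∀ k : Fin r, Q (g k) j = Matrix.cramer M (fun l => A (f l) j) k := by
    intro k
    rw [hQ1 k j, Matrix.cramer_eq_adjugate_mulVec, Matrix.mul_apply]
    simp [Matrix.mulVec, dotProduct]
  simp only [hQval]
  rw [← key i j]
  ring
end

section
/- With P_{I,J}(A) = det(A_{I×J})·Id_n − Q_{I,J}(A) as above: if rank(A) = r and det(A_{I×J}) ≠ 0, then the image of P_{I,J}(A) equals the kernel of A. -/
/-!
Write `B = A_{I×J}`, `d = det B`, `M = adj(B)·A_{I×[n]}` and let `S` be the `n × r` matrix whose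
columns are the unit vectors `e_j`, `j ∈ J`. Then `Q = S·M` and `M·S = adj(B)·B = d·1`, so
`Q² = d·Q`; for `d ≠ 0` this makes `d⁻¹Q` a projection, whence `range (d·1 - Q) = ker Q`.
Finally `ker A ⊆ ker Q` because `Q` is a left multiple of `A`, and `Sᵀ·Q·S = d·1` forces
`rank Q ≥ r = rank A`, so the two kernels coincide by rank–nullity.
-/

open Matrix

namespace Matrix

section Selection

variable {R : Type*} [Semiring R] {l n : Type*} [DecidableEq n]

theorem eq_one_submatrix_mul_of_rows [Fintype l] (g : l ↪ n) (M : Matrix l n R) (Q : Matrix n n R)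
    (h_rows : ∀ k j, Q (g k) j = M k j) (h_zero : ∀ i, (∀ k, g k ≠ i) → ∀ j, Q i j = 0) :
    Q = (1 : Matrix n n R).submatrix id g * M := by
  ext i j
  rw [mul_apply]
  by_cases hi : ∃ k, g k = i
  · obtain ⟨k, rfl⟩ := hi
    simp only [submatrix_apply, id_eq, one_apply, ite_mul, one_mul, zero_mul]
    rw [h_rows, Finset.sum_eq_single k (fun b _ hb => if_neg (g.injective.ne hb.symm))
      (by simp), if_pos rfl]
  · push Not at hi
    simp [h_zero i hi, Ne.symm (hi _)]

theorem mul_one_submatrix_id [Fintype n] {m : Type*} (X : Matrix m n R) (g : l → n) :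
    X * (1 : Matrix n n R).submatrix id g = X.submatrix id g := by
  simpa using mul_submatrix_one (Equiv.refl n) g X

theorem one_submatrix_id_mul [Fintype n] {m : Type*} (X : Matrix n m R) (f : l → n) :
    (1 : Matrix n n R).submatrix f id * X = X.submatrix f id := by
  simpa using one_submatrix_mul f (Equiv.refl n) X

theorem transpose_one_submatrix_mul_self [Fintype n] [DecidableEq l] (g : l ↪ n) :
    ((1 : Matrix n n R).submatrix id g)ᵀ * (1 : Matrix n n R).submatrix id g = 1 := by
  rw [transpose_submatrix, transpose_one, mul_one_submatrix_id, submatrix_submatrix,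
    Function.comp_id, Function.id_comp, submatrix_one_embedding]

end Selection

variable {k m n : Type*} [Fintype n]

theorem ker_mulVecLin_le_ker_mul {R : Type*} [CommSemiring R] [Fintype m] (X : Matrix k m R)
    (A : Matrix m n R) :
    LinearMap.ker A.mulVecLin ≤ LinearMap.ker (X * A).mulVecLin := by
  rw [mulVecLin_mul]
  exact LinearMap.ker_le_ker_comp _ _

variable {F : Type*} [Field F]

theorem ker_mulVecLin_eq_of_le_of_rank_le (A : Matrix m n F) (B : Matrix k n F)
    (hle : LinearMap.ker A.mulVecLin ≤ LinearMap.ker B.mulVecLin) (hrank : A.rank ≤ B.rank) :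
    LinearMap.ker A.mulVecLin = LinearMap.ker B.mulVecLin := by
  refine Submodule.eq_of_le_of_finrank_le hle ?_
  have hA := LinearMap.finrank_range_add_finrank_ker A.mulVecLin
  have hB := LinearMap.finrank_range_add_finrank_ker B.mulVecLin
  rw [← rank] at hA hB
  omega

theorem card_le_rank_of_mul_mul_eq_smul_one [Fintype k] [DecidableEq k] [Fintype m] {c : F}
    (hc : c ≠ 0) (X : Matrix k n F) (Q : Matrix n m F) (Y : Matrix m k F)
    (h : X * Q * Y = c • 1) : Fintype.card k ≤ Q.rank :=
  calc Fintype.card k = (X * Q * Y).rank := by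
        rw [h, rank_smul_of_mem_nonZeroDivisors _ (mem_nonZeroDivisors_of_ne_zero hc), rank_one]
    _ ≤ (X * Q).rank := rank_mul_le_left _ _
    _ ≤ Q.rank := rank_mul_le_right _ _

theorem range_smul_one_sub_eq_ker [DecidableEq n] {c : F} (hc : c ≠ 0) {Q : Matrix n n F}
    (hQQ : Q * Q = c • Q) :
    LinearMap.range (c • (1 : Matrix n n F) - Q).mulVecLin = LinearMap.ker Q.mulVecLin := by
  apply le_antisymm
  · rintro _ ⟨v, rfl⟩
    change Q *ᵥ ((c • 1 - Q) *ᵥ v) = 0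
    rw [mulVec_mulVec, Matrix.mul_sub, Matrix.mul_smul, Matrix.mul_one, hQQ, sub_self,
      zero_mulVec]
  · intro v (hv : Q *ᵥ v = 0)
    refine ⟨c⁻¹ • v, ?_⟩
    rw [mulVecLin_apply, mulVec_smul, sub_mulVec, hv, sub_zero, smul_mulVec, one_mulVec,
      smul_smul, inv_mul_cancel₀ hc, one_smul]

end Matrix

/-- With `P_{I,J}(A) = det(A_{I×J})·Id − Q_{I,J}(A)`: if `rank A = r` and
`det(A_{I×J}) ≠ 0`, then the image (column space) of `P_{I,J}(A)` equals the kernel of `A`. -/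
theorem stmt4 {F : Type*} [Field F] {m n r : ℕ}
    (A : Matrix (Fin m) (Fin n) F) (f : Fin r ↪ Fin m) (g : Fin r ↪ Fin n)
    (Q : Matrix (Fin n) (Fin n) F)
    (hQ1 : ∀ (k : Fin r) (j : Fin n),
      Q (g k) j = ((A.submatrix ⇑f ⇑g).adjugate * A.submatrix ⇑f id) k j)
    (hQ2 : ∀ i : Fin n, (∀ k : Fin r, g k ≠ i) → ∀ j : Fin n, Q i j = 0)
    (hrank : A.rank = r) (hdet : (A.submatrix ⇑f ⇑g).det ≠ 0) :
    LinearMap.range ((A.submatrix ⇑f ⇑g).det • (1 : Matrix (Fin n) (Fin n) F) - Q).mulVecLin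
      = LinearMap.ker A.mulVecLin := by
  set d := (A.submatrix f g).det
  set S := (1 : Matrix (Fin n) (Fin n) F).submatrix id g
  set M := (A.submatrix f g).adjugate * A.submatrix f id with hM
  have hQ : Q = S * M := eq_one_submatrix_mul_of_rows g M Q hQ1 hQ2
  have hMS : M * S = d • 1 := by
    rw [Matrix.mul_assoc, mul_one_submatrix_id, submatrix_submatrix, Function.comp_id,
      Function.id_comp, adjugate_mul]
  have hQQ : Q * Q = d • Q := by
    rw [hQ, Matrix.mul_assoc, ← Matrix.mul_assoc M, hMS, Matrix.smul_mul, Matrix.one_mul,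
      Matrix.mul_smul]
  have hSQS : Sᵀ * Q * S = d • 1 := by
    rw [hQ, ← Matrix.mul_assoc, transpose_one_submatrix_mul_self, Matrix.one_mul, hMS]
  have hker : LinearMap.ker A.mulVecLin = LinearMap.ker Q.mulVecLin := by
    refine ker_mulVecLin_eq_of_le_of_rank_le A Q ?_ ?_
    · rw [hQ, hM, ← one_submatrix_id_mul A f, ← Matrix.mul_assoc, ← Matrix.mul_assoc]
      exact ker_mulVecLin_le_ker_mul _ A
    · simpa [hrank] using card_le_rank_of_mul_mul_eq_smul_one hdet Sᵀ Q S hSQS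
  rw [hker]
  exact range_smul_one_sub_eq_ker hdet hQQ
end

section
/- With Q_{I,J}(A) and P_{I,J}(A) as above: if rank(A) < r, then P_{I,J}(A) = 0 and Q_{I,J}(A) = 0. -/
open Matrix

lemma rank_submatrix_le_aux {F : Type*} [Field F] {m n r : ℕ}
    (A : Matrix (Fin m) (Fin n) F) (h : Fin r → Fin m) (k : Fin r → Fin n) :
    (A.submatrix h k).rank ≤ A.rank := by
  have h1 : A.submatrix h k =
      ((1 : Matrix (Fin m) (Fin m) F).submatrix h id) *
        (A * ((1 : Matrix (Fin n) (Fin n) F).submatrix id k)) := by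
    ext i j
    simp [Matrix.mul_apply, Matrix.one_apply, Finset.sum_ite_eq, Finset.sum_ite_eq']
  rw [h1]
  exact le_trans (Matrix.rank_mul_le_right _ _) (Matrix.rank_mul_le_left _ _)

lemma det_submatrix_eq_zero_aux {F : Type*} [Field F] {m n r : ℕ}
    (A : Matrix (Fin m) (Fin n) F) (h : Fin r → Fin m) (k : Fin r → Fin n)
    (hrank : A.rank < r) : (A.submatrix h k).det = 0 := by
  by_contra hd
  have hu : IsUnit (A.submatrix h k) := (Matrix.isUnit_iff_isUnit_det _).2 (isUnit_iff_ne_zero.2 hd)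
  have := Matrix.rank_of_isUnit _ hu
  rw [Fintype.card_fin] at this
  have := rank_submatrix_le_aux A h k
  omega

/-- With `Q_{I,J}(A)` and `P_{I,J}(A)` as above: if `rank A < r` then
`P_{I,J}(A) = 0` and `Q_{I,J}(A) = 0`. -/
theorem stmt5 {F : Type*} [Field F] {m n r : ℕ}
    (A : Matrix (Fin m) (Fin n) F) (f : Fin r ↪ Fin m) (g : Fin r ↪ Fin n)
    (Q : Matrix (Fin n) (Fin n) F)
    (hQ1 : ∀ (k : Fin r) (j : Fin n),
      Q (g k) j = ((A.submatrix ⇑f ⇑g).adjugate * A.submatrix ⇑f id) k j)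
    (hQ2 : ∀ i : Fin n, (∀ k : Fin r, g k ≠ i) → ∀ j : Fin n, Q i j = 0)
    (hrank : A.rank < r) :
    (A.submatrix ⇑f ⇑g).det • (1 : Matrix (Fin n) (Fin n) F) - Q = 0 ∧ Q = 0 := by
  have hQ0 : Q = 0 := by
    ext i j
    by_cases hi : ∃ k : Fin r, g k = i
    · obtain ⟨k, rfl⟩ := hi
      rw [hQ1 k j]
      set B := A.submatrix ⇑f ⇑g with hB
      set b : Fin r → F := fun l => A (f l) j with hb
      have h1 : (B.adjugate * A.submatrix ⇑f id) k j = (B.adjugate *ᵥ b) k := by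
        simp [Matrix.mul_apply, Matrix.mulVec, dotProduct, hb, Matrix.submatrix_apply]
      rw [h1, ← Matrix.cramer_eq_adjugate_mulVec, Matrix.cramer_apply]
      have h2 : B.updateCol k b = A.submatrix ⇑f (Function.update ⇑g k j) := by
        ext i' j'
        by_cases hj' : j' = k <;>
          simp [Matrix.updateCol_apply, Function.update, hj', hb, hB]
      rw [h2]
      exact det_submatrix_eq_zero_aux A _ _ hrank
    · push_neg at hi
      simp [hQ2 i hi j]
  have hd : (A.submatrix ⇑f ⇑g).det = 0 := det_submatrix_eq_zero_aux A _ _ hrank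
  constructor
  · rw [hQ0, hd]; simp
  · exact hQ0
end

section
/- (Uniform resample preserves uniformity) Let Z be a finite nonempty subset of Ω_1 × ⋯ × Ω_d with all relevant sections nonempty. Define a random pair (U, X): U is uniform on Z, and for i = d, d−1, …, 1, X_i is chosen uniformly at random from the section {x ∈ Ω_i : (U_1,…,U_{i−1}, x, X_{i+1},…,X_d) ∈ Z}. Then for every 0 ≤ i ≤ d, the random tuple (U_1,…,U_i, X_{i+1},…,X_d) is uniformly distributed on Z. -/
/-- Uniform resample preserves uniformity. For `u, x : ∀ j, Ω j` and `i : ℕ`, the mixed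
point `mix i u x` takes its first `i` coordinates from `u` and the rest from `x`. -/
def mix {d : ℕ} {Ω : Fin d → Type*} (i : ℕ) (u x : ∀ j, Ω j) : ∀ j, Ω j :=
  fun j => if (j : ℕ) < i then u j else x j

/-- The probability of the resampling trajectory `(u, x)`: `u` is chosen uniformly from
`Z`, and then, for `k = d−1, d−2, …, 0`, the coordinate `x_k` is chosen uniformly from the
section `{a : Ω k | update (mix (k+1) u x) k a ∈ Z}`; choosing `x_k` moves the walk from
`mix (k+1) u x` to `mix k u x`, which must stay in `Z` (else the probability is `0`). -/
noncomputable def resampleWeight {d : ℕ} {Ω : Fin d → Type*} [∀ i, Fintype (Ω i)]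
    [∀ i, DecidableEq (Ω i)] (Z : Finset (∀ j, Ω j)) (u x : ∀ j, Ω j) : ℝ :=
  (if u ∈ Z then (1 : ℝ) / Z.card else 0) *
    ∏ k : Fin d,
      (if mix (k : ℕ) u x ∈ Z then
        (1 : ℝ) / (Finset.univ.filter fun a : Ω k =>
          Function.update (mix ((k : ℕ) + 1) u x) k a ∈ Z).card
      else 0)

section Aux

variable {d : ℕ} {Ω : Fin d → Type*} [∀ i, Fintype (Ω i)] [∀ i, DecidableEq (Ω i)]

/-- The single-step factor of the resampling weight, indexed by a natural number. -/
noncomputable def Fk (Z : Finset (∀ j, Ω j)) (u x : ∀ j, Ω j) (k : ℕ) : ℝ :=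
  if h : k < d then
    (if mix k u x ∈ Z then
      (1 : ℝ) / (Finset.univ.filter fun a : Ω ⟨k, h⟩ =>
        Function.update (mix (k + 1) u x) ⟨k, h⟩ a ∈ Z).card
    else 0)
  else 1

lemma mix_congr {i : ℕ} {u u' x x' : ∀ j, Ω j}
    (hu : ∀ j : Fin d, (j : ℕ) < i → u j = u' j)
    (hx : ∀ j : Fin d, i ≤ (j : ℕ) → x j = x' j) :
    mix i u x = mix i u' x' := by
  funext j
  unfold mix
  split
  · exact hu j ‹_›
  · exact hx j (le_of_not_gt ‹_›)

lemma Fk_congr {Z : Finset (∀ j, Ω j)} {u u' x x' : ∀ j, Ω j} {k : ℕ}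
    (hu : ∀ j : Fin d, (j : ℕ) < k → u j = u' j)
    (hx : ∀ j : Fin d, k ≤ (j : ℕ) → x j = x' j) :
    Fk Z u x k = Fk Z u' x' k := by
  unfold Fk
  split
  case isTrue h =>
    have h1 : mix k u x = mix k u' x' := mix_congr hu hx
    have h2 : ∀ a : Ω ⟨k, h⟩, Function.update (mix (k + 1) u x) ⟨k, h⟩ a
        = Function.update (mix (k + 1) u' x') ⟨k, h⟩ a := by
      intro a
      funext j
      rcases eq_or_ne j ⟨k, h⟩ with rfl | hj
      · simp
      · have hne : (j : ℕ) ≠ k := fun hc => hj (Fin.ext hc)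
        rw [Function.update_of_ne hj, Function.update_of_ne hj]
        unfold mix
        split
        · exact hu j (by omega)
        · exact hx j (by omega)
    rw [h1]
    simp_rw [h2]
  · rfl

lemma mix_succ_update {i : ℕ} (h : i < d) (u x : ∀ j, Ω j) :
    mix i u x = Function.update (mix (i + 1) u x) ⟨i, h⟩ (x ⟨i, h⟩) := by
  funext j
  rcases eq_or_ne j ⟨i, h⟩ with rfl | hj
  · simp [mix]
  · have hne : (j : ℕ) ≠ i := fun hc => hj (Fin.ext hc)
    rw [Function.update_of_ne hj]
    by_cases hji : (j : ℕ) < i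
    · have h2 : (j : ℕ) < i + 1 := by omega
      simp [mix, hji, h2]
    · have h2 : ¬ (j : ℕ) < i + 1 := by omega
      simp [mix, hji, h2]

lemma mix_eq_self {i : ℕ} {u z : ∀ j, Ω j} (hu : ∀ j : Fin d, (j : ℕ) < i → u j = z j) :
    mix i u z = z := by
  funext j
  unfold mix
  split
  · exact hu j ‹_›
  · rfl

lemma resampleWeight_eq (Z : Finset (∀ j, Ω j)) (u x : ∀ j, Ω j) :
    resampleWeight Z u x
      = (if u ∈ Z then (1 : ℝ) / Z.card else 0) * ∏ k ∈ Finset.range d, Fk Z u x k := by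
  unfold resampleWeight
  congr 1
  rw [← Fin.prod_univ_eq_prod_range (fun k => Fk Z u x k)]
  refine Finset.prod_congr rfl fun k _ => ?_
  simp only [Fk, k.isLt, dif_pos, Fin.eta]

/-- Split a sum over a product type along the value of one coordinate. -/
lemma sum_split (ι : Fin d) (F : (∀ j, Ω j) → ℝ) :
    (∑ y : ∀ j, Ω j, F y)
      = ∑ a : Ω ι, ∑ y : ∀ j, Ω j, if y ι = a then F y else 0 := by
  rw [Finset.sum_comm]
  refine Finset.sum_congr rfl fun y _ => ?_
  simpa using Finset.sum_ite_eq Finset.univ (y ι) (fun _ => F y)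

/-- Lemma A: the conditional kernels for the steps `k < i` sum to `1`, provided the
current point `mix i u x` lies in `Z`. -/
lemma lemA (Z : Finset (∀ j, Ω j)) :
    ∀ i : ℕ, i ≤ d → ∀ u x : ∀ j, Ω j, mix i u x ∈ Z →
      (∑ y : ∀ j, Ω j, if (∀ j : Fin d, i ≤ (j : ℕ) → y j = x j)
        then ∏ k ∈ Finset.range i, Fk Z u y k else 0) = 1 := by
  intro i
  induction i with
  | zero =>
    intro _ u x _
    have hiff : ∀ y : ∀ j, Ω j, (∀ j : Fin d, 0 ≤ (j : ℕ) → y j = x j) ↔ y = x := by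
      intro y
      constructor
      · intro h; funext j; exact h j (Nat.zero_le _)
      · rintro rfl; intros; rfl
    have : (∑ y : ∀ j, Ω j, if (∀ j : Fin d, 0 ≤ (j : ℕ) → y j = x j)
        then ∏ k ∈ Finset.range 0, Fk Z u y k else 0)
        = ∑ y : ∀ j, Ω j, if y = x then 1 else 0 :=
      Finset.sum_congr rfl fun y _ => by
        rw [Finset.prod_range_zero]; exact if_congr (hiff y) rfl rfl
    rw [this]
    simp
  | succ i ih =>
    intro hi u x hmem
    have hlt : i < d := hi
    set ι : Fin d := ⟨i, hlt⟩ with hι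
    set w := mix (i + 1) u x with hw
    set sec : Finset (Ω ι) := Finset.univ.filter (fun a => Function.update w ι a ∈ Z)
      with hsec
    have hwsec : w ι ∈ sec := by
      simp only [hsec, Finset.mem_filter, Finset.mem_univ, true_and]
      rw [Function.update_eq_self]
      exact hmem
    have hcard : (sec.card : ℝ) ≠ 0 := by
      have := Finset.card_pos.mpr ⟨_, hwsec⟩
      exact_mod_cast this.ne'
    rw [sum_split ι]
    have key : ∀ a : Ω ι,
        (∑ y : ∀ j, Ω j, if y ι = a then
          (if (∀ j : Fin d, i + 1 ≤ (j : ℕ) → y j = x j)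
            then ∏ k ∈ Finset.range (i + 1), Fk Z u y k else 0) else 0)
        = if a ∈ sec then 1 / (sec.card : ℝ) else 0 := by
      intro a
      set x' := Function.update x ι a with hx'
      have hmix' : mix i u x' = Function.update w ι a := by
        rw [mix_succ_update hlt u x']
        have : mix (i + 1) u x' = w := by
          rw [hw]
          refine mix_congr (fun j _ => rfl) (fun j hj => ?_)
          have : j ≠ ι := by
            intro hc; rw [hc] at hj; simp only [hι, Fin.val_mk] at hj; omega
          rw [hx', Function.update_of_ne this]
        rw [this, hx', Function.update_self]
      have hterm : ∀ y : ∀ j, Ω j,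
          (if y ι = a then
            (if (∀ j : Fin d, i + 1 ≤ (j : ℕ) → y j = x j)
              then ∏ k ∈ Finset.range (i + 1), Fk Z u y k else 0) else 0)
          = (if a ∈ sec then 1 / (sec.card : ℝ) else 0) *
            (if (∀ j : Fin d, i ≤ (j : ℕ) → y j = x' j)
              then ∏ k ∈ Finset.range i, Fk Z u y k else 0) := by
        intro y
        by_cases hc : y ι = a ∧ (∀ j : Fin d, i + 1 ≤ (j : ℕ) → y j = x j)
        · obtain ⟨hc1, hc2⟩ := hc
          have hcond : ∀ j : Fin d, i ≤ (j : ℕ) → y j = x' j := by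
            intro j hj
            rcases eq_or_ne j ι with rfl | hj'
            · rw [hc1, hx', Function.update_self]
            · have : i + 1 ≤ (j : ℕ) := by
                rcases Nat.lt_or_ge (j : ℕ) (i + 1) with h' | h'
                · exfalso; exact hj' (Fin.ext (show (j : ℕ) = i by omega))
                · exact h'
              rw [hc2 j this, hx', Function.update_of_ne hj']
          have hmixy : mix (i + 1) u y = w := by
            rw [hw]; exact mix_congr (fun j _ => rfl) (fun j hj => hc2 j hj)
          have hFk : Fk Z u y i = if a ∈ sec then 1 / (sec.card : ℝ) else 0 := by
            unfold Fk
            rw [dif_pos hlt]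
            have hmixyi : mix i u y = Function.update w ι a := by
              rw [mix_succ_update hlt u y]
              rw [hmixy, show y ⟨i, hlt⟩ = a from hc1]
            have hfilter : (Finset.univ.filter fun b : Ω ⟨i, hlt⟩ =>
                Function.update (mix (i + 1) u y) ⟨i, hlt⟩ b ∈ Z) = sec := by
              rw [hsec]
              refine Finset.filter_congr fun b _ => ?_
              rw [hmixy]
            rw [hmixyi, hfilter]
            have : Function.update w ι a ∈ Z ↔ a ∈ sec := by
              simp [hsec]
            split
            · rw [if_pos (this.mp ‹_›)]
            · rw [if_neg (fun h => ‹¬ _› (by simpa [hsec] using h))]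
          rw [if_pos hc1, if_pos hc2, if_pos hcond, Finset.prod_range_succ, hFk,
            mul_comm]
        · have h1 : ¬ (∀ j : Fin d, i ≤ (j : ℕ) → y j = x' j) := by
            intro hcond
            apply hc
            constructor
            · have := hcond ι (by simp [hι])
              rwa [hx', Function.update_self] at this
            · intro j hj
              have hj' : j ≠ ι := by
                intro hc'; rw [hc'] at hj; simp only [hι, Fin.val_mk] at hj; omega
              have := hcond j (by omega)
              rwa [hx', Function.update_of_ne hj'] at this
          rw [if_neg h1, mul_zero]
          by_cases h2 : y ι = a
          · rw [if_pos h2]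
            rw [if_neg (fun h => hc ⟨h2, h⟩)]
          · rw [if_neg h2]
      rw [Finset.sum_congr rfl fun y _ => hterm y, ← Finset.mul_sum]
      by_cases ha : a ∈ sec
      · have hmem' : mix i u x' ∈ Z := by
          rw [hmix']
          simpa [hsec] using ha
        rw [ih (le_of_lt hlt) u x' hmem', mul_one]
      · rw [if_neg ha, zero_mul]
    rw [Finset.sum_congr rfl fun a _ => key a]
    rw [Finset.sum_ite_mem, Finset.univ_inter, Finset.sum_const, nsmul_eq_mul]
    field_simp

/-- Lemma B: choosing `u` uniformly in `Z` and running the resampling steps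
`d-1, …, i` puts mass `1/|Z|` on each point of `Z` (and `0` elsewhere). -/
lemma lemB (Z : Finset (∀ j, Ω j)) :
    ∀ m : ℕ, m ≤ d → ∀ z : ∀ j, Ω j,
      (∑ u : ∀ j, Ω j, if (∀ j : Fin d, (j : ℕ) < d - m → u j = z j)
        then (if u ∈ Z then (1 : ℝ) / Z.card else 0) * ∏ k ∈ Finset.Ico (d - m) d, Fk Z u z k
        else 0)
      = if z ∈ Z then (1 : ℝ) / Z.card else 0 := by
  intro m
  induction m with
  | zero =>
    intro _ z
    have hiff : ∀ u : ∀ j, Ω j, (∀ j : Fin d, (j : ℕ) < d - 0 → u j = z j) ↔ u = z := by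
      intro u
      constructor
      · intro h; funext j; exact h j (by omega)
      · rintro rfl; intros; rfl
    have : (∑ u : ∀ j, Ω j, if (∀ j : Fin d, (j : ℕ) < d - 0 → u j = z j)
        then (if u ∈ Z then (1 : ℝ) / Z.card else 0) * ∏ k ∈ Finset.Ico (d - 0) d, Fk Z u z k
        else 0)
        = ∑ u : ∀ j, Ω j, if u = z then (if u ∈ Z then (1 : ℝ) / Z.card else 0) else 0 :=
      Finset.sum_congr rfl fun u _ => by
        rw [Nat.sub_zero, Finset.Ico_self, Finset.prod_empty, mul_one]
        exact if_congr (hiff u) rfl rfl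
    rw [this]
    simp
  | succ m ih =>
    intro hm z
    have hlt : d - (m + 1) < d := by omega
    set i : ℕ := d - (m + 1) with hidef
    have hisucc : i + 1 = d - m := by omega
    set ι : Fin d := ⟨i, hlt⟩ with hι
    set secz : Finset (Ω ι) := Finset.univ.filter (fun a => Function.update z ι a ∈ Z)
      with hsecz
    set cZ : ℝ := if z ∈ Z then 1 / (secz.card : ℝ) else 0 with hcZ
    have hterm : ∀ u : ∀ j, Ω j,
        (if (∀ j : Fin d, (j : ℕ) < i → u j = z j)
          then (if u ∈ Z then (1 : ℝ) / Z.card else 0) * ∏ k ∈ Finset.Ico i d, Fk Z u z k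
          else 0)
        = cZ * (if (∀ j : Fin d, (j : ℕ) < i → u j = z j)
            then (if u ∈ Z then (1 : ℝ) / Z.card else 0)
              * ∏ k ∈ Finset.Ico (i + 1) d, Fk Z u z k
            else 0) := by
      intro u
      by_cases hc : ∀ j : Fin d, (j : ℕ) < i → u j = z j
      · rw [if_pos hc, if_pos hc]
        have hFk : Fk Z u z i = cZ := by
          unfold Fk
          rw [dif_pos hlt]
          have hmix : mix i u z = z := mix_eq_self hc
          have hfilter : (Finset.univ.filter fun b : Ω ⟨i, hlt⟩ =>
              Function.update (mix (i + 1) u z) ⟨i, hlt⟩ b ∈ Z) = secz := by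
            rw [hsecz]
            refine Finset.filter_congr fun b _ => ?_
            have : Function.update (mix (i + 1) u z) ι b = Function.update z ι b := by
              funext j
              rcases eq_or_ne j ι with rfl | hj
              · simp
              · rw [Function.update_of_ne hj, Function.update_of_ne hj]
                have hne : (j : ℕ) ≠ i := fun hc' => hj (Fin.ext hc')
                unfold mix
                split
                · exact hc j (by omega)
                · rfl
            rw [this]
          rw [hmix, hfilter, hcZ]
        rw [Finset.prod_eq_prod_Ico_succ_bot hlt, hFk]
        ring
      · rw [if_neg hc, if_neg hc, mul_zero]
    rw [Finset.sum_congr rfl fun u _ => hterm u, ← Finset.mul_sum]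
    rw [sum_split ι (fun u => if (∀ j : Fin d, (j : ℕ) < i → u j = z j)
      then (if u ∈ Z then (1 : ℝ) / Z.card else 0)
        * ∏ k ∈ Finset.Ico (i + 1) d, Fk Z u z k
      else 0)]
    have key : ∀ a : Ω ι,
        (∑ u : ∀ j, Ω j, if u ι = a then
          (if (∀ j : Fin d, (j : ℕ) < i → u j = z j)
            then (if u ∈ Z then (1 : ℝ) / Z.card else 0)
              * ∏ k ∈ Finset.Ico (i + 1) d, Fk Z u z k
            else 0) else 0)
        = if a ∈ secz then (1 : ℝ) / Z.card else 0 := by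
      intro a
      set z' := Function.update z ι a with hz'
      have hz'mem : z' ∈ Z ↔ a ∈ secz := by
        simp [hz', hsecz]
      have hstep : ∀ u : ∀ j, Ω j,
          (if u ι = a then
            (if (∀ j : Fin d, (j : ℕ) < i → u j = z j)
              then (if u ∈ Z then (1 : ℝ) / Z.card else 0)
                * ∏ k ∈ Finset.Ico (i + 1) d, Fk Z u z k
              else 0) else 0)
          = (if (∀ j : Fin d, (j : ℕ) < d - m → u j = z' j)
              then (if u ∈ Z then (1 : ℝ) / Z.card else 0)
                * ∏ k ∈ Finset.Ico (d - m) d, Fk Z u z' k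
              else 0) := by
        intro u
        rw [← hisucc]
        have hiff : (u ι = a ∧ (∀ j : Fin d, (j : ℕ) < i → u j = z j))
            ↔ (∀ j : Fin d, (j : ℕ) < i + 1 → u j = z' j) := by
          constructor
          · rintro ⟨h1, h2⟩ j hj
            rcases eq_or_ne j ι with rfl | hj'
            · rw [h1, hz', Function.update_self]
            · have hne : (j : ℕ) ≠ i := fun hc' => hj' (Fin.ext hc')
              rw [h2 j (by omega), hz', Function.update_of_ne hj']
          · intro h
            constructor
            · have := h ι (by simp [hι])
              rwa [hz', Function.update_self] at this
            · intro j hj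
              have hj' : j ≠ ι := by
                intro hc'; rw [hc'] at hj; simp only [hι, Fin.val_mk] at hj; omega
              have := h j (by omega)
              rwa [hz', Function.update_of_ne hj'] at this
        have hprod : ∏ k ∈ Finset.Ico (i + 1) d, Fk Z u z k
            = ∏ k ∈ Finset.Ico (i + 1) d, Fk Z u z' k := by
          refine Finset.prod_congr rfl fun k hk => ?_
          have hk' : i + 1 ≤ k := (Finset.mem_Ico.mp hk).1
          refine Fk_congr (fun j _ => rfl) (fun j hj => ?_)
          have hj' : j ≠ ι := by
            intro hc'; rw [hc'] at hj; simp only [hι, Fin.val_mk] at hj; omega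
          rw [hz', Function.update_of_ne hj']
        by_cases hc : u ι = a ∧ (∀ j : Fin d, (j : ℕ) < i → u j = z j)
        · rw [if_pos hc.1, if_pos hc.2, if_pos (hiff.mp hc), hprod]
        · rw [if_neg (fun h => hc (hiff.mpr h))]
          by_cases h2 : u ι = a
          · rw [if_pos h2, if_neg (fun h => hc ⟨h2, h⟩)]
          · rw [if_neg h2]
      rw [Finset.sum_congr rfl fun u _ => hstep u, ih (by omega) z']
      by_cases ha : a ∈ secz
      · rw [if_pos (hz'mem.mpr ha), if_pos ha]
      · rw [if_neg (fun hh => ha (hz'mem.mp hh)), if_neg ha]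
    rw [Finset.sum_congr rfl fun a _ => key a]
    rw [Finset.sum_ite_mem, Finset.univ_inter, Finset.sum_const, nsmul_eq_mul]
    by_cases hzZ : z ∈ Z
    · have hzsec : z ι ∈ secz := by
        simp only [hsecz, Finset.mem_filter, Finset.mem_univ, true_and]
        rw [Function.update_eq_self]
        exact hzZ
      have hcard : (secz.card : ℝ) ≠ 0 := by
        have := Finset.card_pos.mpr ⟨_, hzsec⟩
        exact_mod_cast this.ne'
      rw [hcZ, if_pos hzZ, if_pos hzZ]
      field_simp
    · rw [hcZ, if_neg hzZ, if_neg hzZ]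
      simp

end Aux

/-- Uniform resample preserves uniformity: for every `0 ≤ i ≤ d` and every `z ∈ Z`, the
probability that the intermediate point `(U_1,…,U_i,X_{i+1},…,X_d)` of the resampling walk
equals `z` is `1/|Z|`; that is, this point is uniformly distributed on `Z`. -/
theorem stmt10 {d : ℕ} {Ω : Fin d → Type*} [∀ i, Fintype (Ω i)] [∀ i, DecidableEq (Ω i)]
    (Z : Finset (∀ j, Ω j)) (hZ : Z.Nonempty) (i : ℕ) (hi : i ≤ d)
    (z : ∀ j, Ω j) (hz : z ∈ Z) :
    (∑ u : ∀ j, Ω j, ∑ x : ∀ j, Ω j,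
        if mix i u x = z then resampleWeight Z u x else 0) = 1 / Z.card := by
  classical
  have hmain : ∀ u : ∀ j, Ω j,
      (∑ x : ∀ j, Ω j, if mix i u x = z then resampleWeight Z u x else 0)
      = (if (∀ j : Fin d, (j : ℕ) < i → u j = z j)
          then (if u ∈ Z then (1 : ℝ) / Z.card else 0) * ∏ k ∈ Finset.Ico i d, Fk Z u z k
          else 0) := by
    intro u
    have hiff : ∀ x : ∀ j, Ω j, mix i u x = z ↔
        ((∀ j : Fin d, (j : ℕ) < i → u j = z j) ∧ (∀ j : Fin d, i ≤ (j : ℕ) → x j = z j)) := by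
      intro x
      constructor
      · intro h
        constructor
        · intro j hj
          have := congrFun h j
          rwa [show mix i u x j = u j by unfold mix; rw [if_pos hj]] at this
        · intro j hj
          have := congrFun h j
          rwa [show mix i u x j = x j by unfold mix; rw [if_neg (by omega)]] at this
      · rintro ⟨h1, h2⟩
        funext j
        unfold mix
        split
        · exact h1 j ‹_›
        · exact h2 j (le_of_not_gt ‹_›)
    have hterm : ∀ x : ∀ j, Ω j,
        (if mix i u x = z then resampleWeight Z u x else 0)
        = (if (∀ j : Fin d, (j : ℕ) < i → u j = z j)
            then (if u ∈ Z then (1 : ℝ) / Z.card else 0) * ∏ k ∈ Finset.Ico i d, Fk Z u z k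
            else 0)
          * (if (∀ j : Fin d, i ≤ (j : ℕ) → x j = z j)
              then ∏ k ∈ Finset.range i, Fk Z u x k else 0) := by
      intro x
      by_cases hc : mix i u x = z
      · obtain ⟨h1, h2⟩ := (hiff x).mp hc
        rw [if_pos hc, if_pos h1, if_pos h2, resampleWeight_eq]
        rw [← Finset.prod_range_mul_prod_Ico (Fk Z u x) hi]
        have hprod : ∏ k ∈ Finset.Ico i d, Fk Z u x k
            = ∏ k ∈ Finset.Ico i d, Fk Z u z k := by
          refine Finset.prod_congr rfl fun k hk => ?_
          have hk' : i ≤ k := (Finset.mem_Ico.mp hk).1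
          exact Fk_congr (fun j _ => rfl) (fun j hj => h2 j (by omega))
        rw [hprod]
        ring
      · rw [if_neg hc]
        by_cases h1 : ∀ j : Fin d, (j : ℕ) < i → u j = z j
        · by_cases h2 : ∀ j : Fin d, i ≤ (j : ℕ) → x j = z j
          · exact absurd ((hiff x).mpr ⟨h1, h2⟩) hc
          · rw [if_neg h2, mul_zero]
        · rw [if_neg h1, zero_mul]
    rw [Finset.sum_congr rfl fun x _ => hterm x, ← Finset.mul_sum]
    by_cases h1 : ∀ j : Fin d, (j : ℕ) < i → u j = z j
    · have hmem : mix i u z ∈ Z := by rw [mix_eq_self h1]; exact hz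
      rw [lemA Z i hi u z hmem, mul_one]
    · rw [if_neg h1, zero_mul]
  rw [Finset.sum_congr rfl fun u _ => hmain u]
  have hB := lemB Z (d - i) (Nat.sub_le d i) z
  rw [Nat.sub_sub_self hi] at hB
  rw [hB, if_pos hz]
end

section
/- (Partition rank under field extension) Let K/F be a finite field extension of degree ℓ, and T a k-tensor (multilinear form) over F. Then PR(T) ≤ ℓ · PR(T^K), where T^K denotes T viewed as a tensor over K, and PR denotes partition rank (minimum number of reducible multilinear forms summing to T). -/
/-!
Choose an `F`-linear retraction `φ : K → F` of the inclusion `F ⊆ K`. Then `T = φ ∘ T^K` on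
`V^k ⊆ (K ⊗ V)^k`, so a decomposition `T^K = ∑ᵢ Pᵢ Qᵢ` into `r` reducible forms gives
`T = ∑ᵢ φ(Pᵢ Qᵢ)`. Expanding `Pᵢ` in a basis `(e_j)` of `K/F` splits each term further:
`φ(Pᵢ Qᵢ) = ∑ⱼ e_j^*(Pᵢ) · φ(e_j Qᵢ)`, a sum of `ℓ` reducible `F`-forms.

Since `PR` is `0` by convention for a form that is no finite sum of reducible forms, one also needs
`T^K` to have some decomposition whenever `T` has one: extend scalars in each term.
-/

open scoped TensorProduct

/-- A multilinear form `S : M^k → R` is reducible if it is the product of two multilinear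
forms depending on complementary nonempty subsets of the argument slots. -/
def MLReducible {R M : Type*} [CommSemiring R] [AddCommMonoid M] [Module R M] {k : ℕ}
    (S : MultilinearMap R (fun _ : Fin k => M) R) : Prop :=
  ∃ A : Finset (Fin k), A.Nonempty ∧ Aᶜ.Nonempty ∧
    ∃ (P : MultilinearMap R (fun _ : {i // i ∈ A} => M) R)
      (Q : MultilinearMap R (fun _ : {i // i ∈ Aᶜ} => M) R),
      ∀ x, S x = P (fun i => x i.1) * Q (fun j => x j.1)

/-- The partition rank: the minimum number of reducible multilinear forms summing to `T`. -/
noncomputable def partitionRank {R M : Type*} [CommSemiring R] [AddCommMonoid M]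
    [Module R M] {k : ℕ} (T : MultilinearMap R (fun _ : Fin k => M) R) : ℕ :=
  sInf {r | ∃ S : Fin r → MultilinearMap R (fun _ : Fin k => M) R,
    (∀ i, MLReducible (S i)) ∧ T = ∑ i, S i}

section PartitionRank

variable {R M : Type*} [CommSemiring R] [AddCommMonoid M] [Module R M] {k : ℕ}

namespace MultilinearMap

def splitEquiv (A : Finset (Fin k)) : {i // i ∈ A} ⊕ {i // i ∈ Aᶜ} ≃ Fin k :=
  (Equiv.sumCongr (Equiv.refl _) (Equiv.subtypeEquivRight fun _ => Finset.mem_compl)).trans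
    (Equiv.sumCompl (· ∈ A))

noncomputable def splitMul (A : Finset (Fin k))
    (P : MultilinearMap R (fun _ : {i // i ∈ A} => M) R)
    (Q : MultilinearMap R (fun _ : {i // i ∈ Aᶜ} => M) R) :
    MultilinearMap R (fun _ : Fin k => M) R :=
  (LinearMap.mul' R R).compMultilinearMap ((P.domCoprod Q).domDomCongr (splitEquiv A))

@[simp]
lemma splitMul_apply (A : Finset (Fin k))
    (P : MultilinearMap R (fun _ : {i // i ∈ A} => M) R)
    (Q : MultilinearMap R (fun _ : {i // i ∈ Aᶜ} => M) R) (x : Fin k → M) :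
    splitMul A P Q x = P (fun i => x i.1) * Q (fun j => x j.1) := by
  simp [splitMul, splitEquiv, domDomCongr_apply, domCoprod_apply]

end MultilinearMap

lemma mlReducible_splitMul {A : Finset (Fin k)} (hA : A.Nonempty) (hAc : Aᶜ.Nonempty)
    (P : MultilinearMap R (fun _ : {i // i ∈ A} => M) R)
    (Q : MultilinearMap R (fun _ : {i // i ∈ Aᶜ} => M) R) :
    MLReducible (MultilinearMap.splitMul A P Q) :=
  ⟨A, hA, hAc, P, Q, MultilinearMap.splitMul_apply A P Q⟩

lemma partitionRank_le_card {ι : Type*} [Fintype ι] {T : MultilinearMap R (fun _ : Fin k => M) R}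
    (S : ι → MultilinearMap R (fun _ : Fin k => M) R) (hS : ∀ i, MLReducible (S i))
    (hT : T = ∑ i, S i) : partitionRank T ≤ Fintype.card ι := by
  let e := Fintype.equivFin ι
  refine Nat.sInf_le ⟨S ∘ e.symm, fun i => hS _, ?_⟩
  rw [hT]
  exact (e.symm.sum_comp S).symm

lemma exists_sum_eq_of_partitionRank {T : MultilinearMap R (fun _ : Fin k => M) R} {r : ℕ}
    (S : Fin r → MultilinearMap R (fun _ : Fin k => M) R) (hS : ∀ i, MLReducible (S i))
    (hT : T = ∑ i, S i) :
    ∃ S : Fin (partitionRank T) → MultilinearMap R (fun _ : Fin k => M) R,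
      (∀ i, MLReducible (S i)) ∧ T = ∑ i, S i := by
  have hne : {r | ∃ S : Fin r → MultilinearMap R (fun _ : Fin k => M) R,
      (∀ i, MLReducible (S i)) ∧ T = ∑ i, S i}.Nonempty := ⟨r, S, hS, hT⟩
  exact Nat.sInf_mem hne

lemma partitionRank_eq_zero_of_not_exists {T : MultilinearMap R (fun _ : Fin k => M) R}
    (h : ¬ ∃ (r : ℕ) (S : Fin r → MultilinearMap R (fun _ : Fin k => M) R),
      (∀ i, MLReducible (S i)) ∧ T = ∑ i, S i) :
    partitionRank T = 0 :=
  Nat.sInf_eq_zero.mpr (Or.inr (Set.eq_empty_of_forall_notMem fun r hr => h ⟨r, hr⟩))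

end PartitionRank

section Instances

variable {R ι : Type*} {M₁ : ι → Type*} {M₂ : Type*} [Semiring R]
  [∀ i, AddCommMonoid (M₁ i)] [AddCommMonoid M₂] [∀ i, Module R (M₁ i)] [Module R M₂]
  {S A : Type*} [Semiring S] [Semiring A] [Module S M₂] [Module A M₂]
  [SMulCommClass R S M₂] [SMulCommClass R A M₂]

instance MultilinearMap.instIsScalarTower [SMul S A] [IsScalarTower S A M₂] :
    IsScalarTower S A (MultilinearMap R M₁ M₂) :=
  ⟨fun c a f => MultilinearMap.ext fun x => smul_assoc c a (f x)⟩

end Instances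

section BaseChange

variable (F K V : Type*) [Field F] [Field K] [Algebra F K] [AddCommGroup V] [Module F V]

/-- Curry off one variable at a time and extend each curried map with
`LinearMap.liftBaseChange`. -/
noncomputable def formBaseChange : ∀ n : ℕ,
    MultilinearMap F (fun _ : Fin n => V) F →ₗ[F]
      MultilinearMap K (fun _ : Fin n => K ⊗[F] V) K
  | 0 =>
    ((MultilinearMap.constLinearEquivOfIsEmpty (R := K) (S := K)
        (M₁ := fun _ : Fin 0 => K ⊗[F] V) (M₂ := K)).toLinearMap.restrictScalars F)
      ∘ₗ (Algebra.linearMap F K)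
      ∘ₗ (MultilinearMap.constLinearEquivOfIsEmpty (R := F) (S := F)
        (M₁ := fun _ : Fin 0 => V) (M₂ := F)).symm.toLinearMap
  | (n+1) =>
    (((multilinearCurryLeftEquiv K (fun _ : Fin (n+1) => K ⊗[F] V) K).symm.restrictScalars
        F).toLinearMap)
      ∘ₗ (((LinearMap.liftBaseChangeEquiv (R := F) (M := V)
          (N := MultilinearMap K (fun _ : Fin n => K ⊗[F] V) K) K).restrictScalars F).toLinearMap)
      ∘ₗ (LinearMap.llcomp F V _ _ (formBaseChange n))
      ∘ₗ (multilinearCurryLeftEquiv F (fun _ : Fin (n+1) => V) F).toLinearMap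

variable {F K V}

lemma formBaseChange_one_tmul : ∀ (n : ℕ) (P : MultilinearMap F (fun _ : Fin n => V) F)
    (v : Fin n → V),
    formBaseChange F K V n P (fun i => (1 : K) ⊗ₜ[F] v i) = algebraMap F K (P v)
  | 0, P, v => by
    simp only [formBaseChange, LinearMap.coe_comp, Function.comp_apply, LinearEquiv.coe_coe,
      MultilinearMap.constLinearEquivOfIsEmpty_apply, MultilinearMap.constOfIsEmpty_apply,
      Algebra.linearMap_apply, LinearMap.coe_restrictScalars]
    exact congrArg (algebraMap F K) (congrArg P (Subsingleton.elim _ _))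
  | (n+1), P, v => by
    simp only [formBaseChange, LinearMap.coe_comp, Function.comp_apply, LinearEquiv.coe_coe,
      LinearEquiv.restrictScalars_apply]
    change LinearMap.uncurryLeft _ _ = _
    rw [LinearMap.uncurryLeft_apply, LinearMap.liftBaseChange_tmul, one_smul]
    change formBaseChange F K V n (P.curryLeft (v 0)) (fun i => (1 : K) ⊗ₜ[F] Fin.tail v i) = _
    rw [formBaseChange_one_tmul n, MultilinearMap.curryLeft_apply, Fin.cons_self_tail]

lemma MultilinearMap.exists_baseChange {ι : Type*} [Finite ι]
    (P : MultilinearMap F (fun _ : ι => V) F) :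
    ∃ PK : MultilinearMap K (fun _ : ι => K ⊗[F] V) K,
      ∀ v, PK (fun i => (1 : K) ⊗ₜ[F] v i) = algebraMap F K (P v) := by
  obtain ⟨n, ⟨e⟩⟩ := Finite.exists_equiv_fin ι
  refine ⟨(formBaseChange F K V n (P.domDomCongr e)).domDomCongr e.symm, fun v => ?_⟩
  simp only [domDomCongr_apply, formBaseChange_one_tmul, Equiv.symm_apply_apply]

lemma MultilinearMap.ext_one_tmul {ι : Type*} [Finite ι]
    {f g : MultilinearMap K (fun _ : ι => K ⊗[F] V) K}
    (h : ∀ v : ι → V, f (fun i => (1 : K) ⊗ₜ[F] v i) = g (fun i => (1 : K) ⊗ₜ[F] v i)) :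
    f = g := by
  let b := (Module.Basis.ofVectorSpace F V).baseChange K
  exact Module.Basis.ext_multilinear (fun _ => b) fun v => by
    simpa only [b, Module.Basis.baseChange_apply] using h _

variable {k : ℕ}

lemma MLReducible.exists_baseChange {S : MultilinearMap F (fun _ : Fin k => V) F}
    (hS : MLReducible S) :
    ∃ SK : MultilinearMap K (fun _ : Fin k => K ⊗[F] V) K, MLReducible SK ∧
      ∀ v, SK (fun i => (1 : K) ⊗ₜ[F] v i) = algebraMap F K (S v) := by
  obtain ⟨A, hA, hAc, P, Q, hPQ⟩ := hS
  obtain ⟨PK, hPK⟩ := P.exists_baseChange (K := K)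
  obtain ⟨QK, hQK⟩ := Q.exists_baseChange (K := K)
  refine ⟨MultilinearMap.splitMul A PK QK, mlReducible_splitMul hA hAc PK QK, fun v => ?_⟩
  rw [MultilinearMap.splitMul_apply, hPK, hQK, hPQ, map_mul]

lemma exists_sum_eq_of_baseChange {T : MultilinearMap F (fun _ : Fin k => V) F}
    {TK : MultilinearMap K (fun _ : Fin k => K ⊗[F] V) K}
    (hTK : ∀ x : Fin k → V, TK (fun i => (1 : K) ⊗ₜ[F] x i) = algebraMap F K (T x))
    {r : ℕ} (S : Fin r → MultilinearMap F (fun _ : Fin k => V) F)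
    (hS : ∀ i, MLReducible (S i)) (hT : T = ∑ i, S i) :
    ∃ SK : Fin r → MultilinearMap K (fun _ : Fin k => K ⊗[F] V) K,
      (∀ i, MLReducible (SK i)) ∧ TK = ∑ i, SK i := by
  choose SK hSK hSKS using fun i => (hS i).exists_baseChange (K := K)
  refine ⟨SK, hSK, MultilinearMap.ext_one_tmul fun v => ?_⟩
  simp only [hTK, hT, _root_.sum_apply, map_sum, hSKS]

end BaseChange

section Descent

variable {F K V : Type*} [Field F] [Field K] [Algebra F K] [AddCommGroup V] [Module F V]

noncomputable def MultilinearMap.descend {ι : Type*} (φ : K →ₗ[F] F)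
    (S : MultilinearMap K (fun _ : ι => K ⊗[F] V) K) : MultilinearMap F (fun _ : ι => V) F :=
  φ.compMultilinearMap ((S.restrictScalars F).compLinearMap fun _ => TensorProduct.mk F K V 1)

@[simp]
lemma MultilinearMap.descend_apply {ι : Type*} (φ : K →ₗ[F] F)
    (S : MultilinearMap K (fun _ : ι => K ⊗[F] V) K) (x : ι → V) :
    S.descend φ x = φ (S fun i => (1 : K) ⊗ₜ[F] x i) :=
  rfl

lemma MultilinearMap.descend_sum {ι κ : Type*} [Fintype κ] (φ : K →ₗ[F] F)
    (S : κ → MultilinearMap K (fun _ : ι => K ⊗[F] V) K) :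
    (∑ j, S j).descend φ = ∑ j, (S j).descend φ := by
  ext x
  simp only [descend_apply, _root_.sum_apply]
  exact _root_.map_sum φ _ _

lemma Module.Basis.map_mul_eq_sum_coord {ι : Type*} [Fintype ι] (e : Module.Basis ι F K)
    (φ : K →ₗ[F] F) (a q : K) : φ (a * q) = ∑ j, e.coord j a * φ (e j * q) := by
  conv_lhs => rw [← e.sum_repr a]
  simp only [Finset.sum_mul, map_sum, smul_mul_assoc, map_smul, smul_eq_mul, coord_apply]

variable {k : ℕ}

lemma MLReducible.exists_sum_eq_descend {ι : Type*} [Fintype ι] (e : Module.Basis ι F K)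
    (φ : K →ₗ[F] F) {S : MultilinearMap K (fun _ : Fin k => K ⊗[F] V) K} (hS : MLReducible S) :
    ∃ G : ι → MultilinearMap F (fun _ : Fin k => V) F,
      (∀ j, MLReducible (G j)) ∧ S.descend φ = ∑ j, G j := by
  obtain ⟨A, hA, hAc, P, Q, hPQ⟩ := hS
  refine ⟨fun j => MultilinearMap.splitMul A (P.descend (e.coord j))
      (Q.descend (φ ∘ₗ LinearMap.mulLeft F (e j))),
    fun j => mlReducible_splitMul hA hAc _ _, ?_⟩
  ext x
  rw [MultilinearMap.descend_apply, hPQ, e.map_mul_eq_sum_coord φ, _root_.sum_apply]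
  simp only [MultilinearMap.splitMul_apply, MultilinearMap.descend_apply, LinearMap.comp_apply,
    LinearMap.mulLeft_apply]

theorem partitionRank_le_of_sum_eq {T : MultilinearMap F (fun _ : Fin k => V) F}
    {TK : MultilinearMap K (fun _ : Fin k => K ⊗[F] V) K}
    (hTK : ∀ x : Fin k → V, TK (fun i => (1 : K) ⊗ₜ[F] x i) = algebraMap F K (T x))
    {ℓ : ℕ} (hl : Module.finrank F K = ℓ) [FiniteDimensional F K]
    {r : ℕ} (S : Fin r → MultilinearMap K (fun _ : Fin k => K ⊗[F] V) K)
    (hS : ∀ i, MLReducible (S i)) (hTS : TK = ∑ i, S i) :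
    partitionRank T ≤ ℓ * r := by
  obtain ⟨φ, hφ⟩ := (Algebra.linearMap F K).exists_leftInverse_of_injective
    (LinearMap.ker_eq_bot.mpr (algebraMap F K).injective)
  have hT : T = TK.descend φ := by
    ext x
    rw [MultilinearMap.descend_apply, hTK, ← Algebra.linearMap_apply, ← LinearMap.comp_apply, hφ,
      LinearMap.id_apply]
  choose G hG hSG using fun i =>
    (hS i).exists_sum_eq_descend (Module.finBasisOfFinrankEq F K hl) φ
  calc partitionRank T ≤ Fintype.card (Fin r × Fin ℓ) :=
        partitionRank_le_card (fun p => G p.1 p.2) (fun p => hG p.1 p.2) <| by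
          rw [hT, hTS, MultilinearMap.descend_sum, Fintype.sum_prod_type]
          simp only [hSG]
    _ = ℓ * r := by simp [mul_comm]

end Descent

/-- Partition rank under field extension: if `K/F` is a field extension of finite degree
`ℓ` and `T^K` is the `K`-multilinear extension of `T` to `(K ⊗_F V)^k`, then
`PR(T) ≤ ℓ · PR(T^K)`. -/
theorem stmt15 {F K V : Type*} [Field F] [Field K] [Algebra F K] [FiniteDimensional F K]
    {k ℓ : ℕ} (hl : Module.finrank F K = ℓ)
    [AddCommGroup V] [Module F V]
    (T : MultilinearMap F (fun _ : Fin k => V) F)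
    (TK : MultilinearMap K (fun _ : Fin k => K ⊗[F] V) K)
    (hTK : ∀ x : Fin k → V, TK (fun i => (1 : K) ⊗ₜ[F] x i) = algebraMap F K (T x)) :
    partitionRank T ≤ ℓ * partitionRank TK := by
  by_cases hdec : ∃ (r : ℕ) (S : Fin r → MultilinearMap F (fun _ : Fin k => V) F),
      (∀ i, MLReducible (S i)) ∧ T = ∑ i, S i
  · obtain ⟨r, S, hS, hT⟩ := hdec
    obtain ⟨SK, hSK, hTSK⟩ := exists_sum_eq_of_baseChange hTK S hS hT
    obtain ⟨S', hS', hTS'⟩ := exists_sum_eq_of_partitionRank SK hSK hTSK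
    exact partitionRank_le_of_sum_eq hTK hl S' hS' hTS'
  · rw [partitionRank_eq_zero_of_not_exists hdec]
    exact Nat.zero_le _
end

section
/- (u^k lower bound from rank) Let p be a prime, ω = e^{2πi/p}, and P : F_p^n → F_p a polynomial of degree k whose degree-k homogeneous part P_k can be written as a function of s polynomials Q_1,…,Q_s each of degree less than k (e.g. s = 2·rank(P), with P_k = Σ R_i S_i). Then max over polynomials Q of degree < k of |E_x[ω^{P(x) − Q(x)}]| ≥ p^{-s}. -/
/-!
Write `ψ` for the character `t ↦ ω^t` and `F = (Q_1, …, Q_s) : F_p^n → F_p^s`. The phase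
`ψ(P_k(x)) = ψ(g(F x))` factors through `F`, and `F` has a fibre of size at least `p^(n-s)`.
Fourier inversion on `F_p^s` at that fibre produces a character `χ` of `F_p^s` whose correlation
with `x ↦ ψ(g(F x))` is at least `p^(n-s)`. Every such `χ` is `y ↦ ψ(j ⬝ᵥ y)`, so
`χ(F x) = ψ(∑ j_i Q_i(x))` is a phase of degree `< k`; together with `P - P_k` it is absorbed into
the polynomial `R`.
-/

/-- The standard additive character `t ↦ e^{2πi·t/p}` of `ZMod p`. -/
noncomputable def stdChar (p : ℕ) (t : ZMod p) : ℂ :=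
  Complex.exp (2 * Real.pi * Complex.I * (t.val : ℂ) / p)

lemma stdChar_eq_stdAddChar {p : ℕ} [NeZero p] (t : ZMod p) : stdChar p t = ZMod.stdAddChar t := by
  rw [ZMod.stdAddChar_apply, ZMod.toCircle_apply, stdChar]

open Finset MvPolynomial

namespace AddChar

variable {G : Type*} [AddCommGroup G] [Fintype G]

theorem exists_norm_apply_le_norm_sum_mul (f : G → ℂ) (y₀ : G) :
    ∃ χ : AddChar G ℂ, ‖f y₀‖ ≤ ‖∑ y, f y * χ y‖ := by
  classical
  have inversion :
      (Fintype.card G : ℂ) * f y₀ = ∑ χ : AddChar G ℂ, χ (-y₀) * ∑ y, f y * χ y := by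
    calc (Fintype.card G : ℂ) * f y₀ = ∑ y, f y * ∑ χ : AddChar G ℂ, χ (y - y₀) := by
          simp_rw [sum_apply_eq_ite, sub_eq_zero, mul_ite, mul_zero]
          rw [Fintype.sum_ite_eq', mul_comm]
      _ = _ := by
          simp_rw [Finset.mul_sum, sub_eq_add_neg, map_add_eq_mul]
          rw [Finset.sum_comm]
          exact Fintype.sum_congr _ _ fun χ => Fintype.sum_congr _ _ fun y => by ring
  refine Finset.exists_le_of_sum_le univ_nonempty ?_ |>.imp fun χ ⟨_, h⟩ => h
  calc ∑ _χ : AddChar G ℂ, ‖f y₀‖ = ‖(Fintype.card G : ℂ) * f y₀‖ := by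
        simp [card_eq]
    _ ≤ ∑ χ : AddChar G ℂ, ‖χ (-y₀) * ∑ y, f y * χ y‖ := inversion ▸ norm_sum_le _ _
    _ = ∑ χ : AddChar G ℂ, ‖∑ y, f y * χ y‖ := by simp [norm_apply]

theorem exists_card_le_card_mul_norm_sum_mul {X : Type*} [Fintype X] (F : X → G) (h : G → ℂ)
    (hh : ∀ y, ‖h y‖ = 1) :
    ∃ χ : AddChar G ℂ, (Fintype.card X : ℝ) ≤ Fintype.card G * ‖∑ x, h (F x) * χ (F x)‖ := by
  classical
  obtain ⟨y₀, -, hy₀⟩ := exists_le_card_fiber_of_nsmul_le_card_of_maps_to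
    (s := univ) (t := univ) (f := F) (b := (Fintype.card X : ℝ) / Fintype.card G)
    (fun x _ => mem_univ (F x)) univ_nonempty (by simp [nsmul_eq_mul, mul_div_cancel₀])
  let c : G → ℕ := fun y => #{x | F x = y}
  obtain ⟨χ, hχ⟩ := exists_norm_apply_le_norm_sum_mul (fun y => c y * h y) y₀
  have pushforward : ∑ x, h (F x) * χ (F x) = ∑ y, c y * h y * χ y := by
    rw [← sum_fiberwise univ F]
    refine Fintype.sum_congr _ _ fun y => ?_
    rw [sum_congr rfl fun x hx => by rw [(mem_filter.1 hx).2], sum_const, nsmul_eq_mul, mul_assoc]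
  refine ⟨χ, ?_⟩
  rw [pushforward, ← div_le_iff₀' (by simp [Fintype.card_pos])]
  have hχ' : (c y₀ : ℝ) ≤ ‖∑ y, c y * h y * χ y‖ := by simpa [hh] using hχ
  exact hy₀.trans hχ'

theorem exists_apply_eq_dotProduct {R ι : Type*} [CommRing R] [Fintype R] [Fintype ι]
    [DecidableEq ι] {ψ : AddChar R ℂ} (hψ : ψ.IsPrimitive) (χ : AddChar (ι → R) ℂ) :
    ∃ j : ι → R, ∀ y, χ y = ψ (j ⬝ᵥ y) := by
  let D : (ι → R) → AddChar (ι → R) ℂ :=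
    fun j => ψ.compAddMonoidHom (AddMonoidHom.mk' (j ⬝ᵥ ·) (dotProduct_add j))
  have hD : D.Injective := fun j j' h => funext fun i =>
    to_mulShift_inj_of_isPrimitive hψ <| DFunLike.ext _ _ fun t => by
      simpa [D, dotProduct_single, mulShift_apply] using DFunLike.congr_fun h (Pi.single i t)
  obtain ⟨j, rfl⟩ := ((Fintype.bijective_iff_injective_and_card D).2 ⟨hD, card_eq.symm⟩).2 χ
  exact ⟨j, fun y => rfl⟩

end AddChar

namespace MvPolynomial

variable {σ R : Type*} [CommRing R]

theorem totalDegree_sub_homogeneousComponent_lt {φ : MvPolynomial σ R} {k : ℕ} (hk : 0 < k)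
    (hφ : φ.totalDegree ≤ k) : (φ - homogeneousComponent k φ).totalDegree < k := by
  rw [totalDegree, Finset.sup_lt_iff hk]
  intro d hd
  rw [mem_support_iff, coeff_sub, coeff_homogeneousComponent] at hd
  have hdk : d.degree ≠ k := fun h => hd (by simp [h])
  have hdφ : d ∈ φ.support := mem_support_iff.2 fun h => hd (by simp [h])
  exact lt_of_le_of_ne ((le_totalDegree hdφ).trans hφ) hdk

end MvPolynomial

/-- `u^k` lower bound from rank: let `p` be prime, `ω = e^{2πi/p}`, and
`P : F_p^n → F_p` a polynomial of degree (at most) `k` whose degree-`k` homogeneous part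
can be written as a function `g` of `s` polynomials `Q_1,…,Q_s`, each of degree `< k`.
Then the maximum over polynomials `R` of degree `< k` of `|E_x[ω^{P(x)−R(x)}]|` is at
least `p^{−s}` (stated as: some such `R` achieves it). -/
theorem stmt19 {p : ℕ} [Fact (Nat.Prime p)] {n k s : ℕ} (hk : 0 < k)
    (P : MvPolynomial (Fin n) (ZMod p)) (hP : P.totalDegree ≤ k)
    (Q : Fin s → MvPolynomial (Fin n) (ZMod p))
    (hQ : ∀ i, (Q i).totalDegree < k)
    (g : (Fin s → ZMod p) → ZMod p)
    (hg : ∀ x : Fin n → ZMod p,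
      MvPolynomial.eval x (MvPolynomial.homogeneousComponent k P)
        = g (fun i => MvPolynomial.eval x (Q i))) :
    ∃ R : MvPolynomial (Fin n) (ZMod p), R.totalDegree < k ∧
      (p : ℝ) ^ (-(s : ℤ)) ≤
        ‖(∑ x : Fin n → ZMod p,
            stdChar p (MvPolynomial.eval x P - MvPolynomial.eval x R))
          / Fintype.card (Fin n → ZMod p)‖ := by
  let ψ : AddChar (ZMod p) ℂ := ZMod.stdAddChar
  let F : (Fin n → ZMod p) → Fin s → ZMod p := fun x i => eval x (Q i)
  obtain ⟨χ, hχ⟩ := AddChar.exists_card_le_card_mul_norm_sum_mul F (ψ ∘ g) fun _ => ψ.norm_apply _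
  obtain ⟨j, hj⟩ := AddChar.exists_apply_eq_dotProduct (ZMod.isPrimitive_stdAddChar p) χ
  let P₀ := P - homogeneousComponent k P
  have hlow : ∀ R : MvPolynomial (Fin n) (ZMod p),
      R.totalDegree < k ↔ R ∈ restrictTotalDegree (Fin n) (ZMod p) (k - 1) := fun R => by
    rw [mem_restrictTotalDegree]; omega
  refine ⟨P₀ - ∑ i, j i • Q i, (hlow _).2 <| Submodule.sub_mem _
    ((hlow _).1 (totalDegree_sub_homogeneousComponent_lt hk hP))
    (Submodule.sum_mem _ fun i _ => Submodule.smul_mem _ _ ((hlow _).1 (hQ i))), ?_⟩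
  have hphase : ∀ x, stdChar p (eval x P - eval x (P₀ - ∑ i, j i • Q i))
      = ψ (g (F x)) * χ (F x) := fun x => by
    rw [stdChar_eq_stdAddChar, hj, ← AddChar.map_add_eq_mul, ← hg x]
    congr 1
    simp only [P₀, F, dotProduct, map_sub, map_sum, smul_eval]
    ring
  simp_rw [hphase]
  simp only [Fintype.card_fun, Fintype.card_fin, ZMod.card, Function.comp_apply] at hχ ⊢
  have hp : (0 : ℝ) < p := by exact_mod_cast (Fact.out : p.Prime).pos
  rw [norm_div, Complex.norm_natCast, Nat.cast_pow, le_div_iff₀ (by positivity), zpow_neg,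
    zpow_natCast, ← div_eq_inv_mul, div_le_iff₀' (by positivity)]
  exact_mod_cast hχ
end
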